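/- Fix n ≥ 2. Let a, b, c, d ∈ ℂ with ad − bc = 1 and c ≠ 0, and let σ_k denote the k-th elementary symmetric function of the multiset of n+1 fixed-point multipliers of f(z) = (a z^n + b)/(c z^n + d), i.e. of the multiset obtained by mapping each root z (with multiplicity) of Φ(z) = c z^{n+1} − a z^n + d z − b to f′(z) = n z^{n−1}/(c z^n + d)². If (a′, b′, c′, d′) is another quadruple with a′d′ − b′c′ = 1, c′ ≠ 0 and b′c′ = bc (equal invariant X), then σ_k = σ′_k for every 0 ≤ k ≤ n+1 with k ≠ n, while σ_n − n^n (a^{n+1}b^{n−1} + c^{n−1}d^{n+1}) = σ′_n − n^n (a′^{n+1}b′^{n−1} + c′^{n−1}d′^{n+1}). (Theorem 2.6: every elementary symmetric function σ_k of the fixed-point multipliers with k ≠ n depends only on X, namely σ_k = n^k P_k(X), while σ_n = n^n (P_n(X) + Y).) -/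

import Mathlib

/-!
At a fixed point `z` one has `(c zⁿ + d)(a - c z) = 1`, so `μ(z) = n z^(n-1) (a - c z)²`, and
`z (t - μ(z)) = n c d z² - (n(1 + 2X) - t) z + n a b`. Factoring this quadratic into two linear
forms turns `∏ z · ∏ (t - μ(z))` into a product of two values of the binary form
`c x^(n+1) - a xⁿ y + d x yⁿ - b y^(n+1)`; expanding gives `bc (nⁿ Y t + R)`, where `R` is a
polynomial in `X` and in the power sums of the roots `u, w` of
`T² - (n(1 + 2X) - t) T + n² X (1 + X)`, so `R` depends on the map only through `X`. Hence
`∏ (T - μ) - (-1)ⁿ nⁿ Y T` depends only on `X`, and Vieta's formulas give the claim. When `b = 0`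
the fixed point `0` (with multiplier `0`) is split off instead, and `t - μ` is affine in `z` at
the other fixed points.
-/

open Polynomial

namespace Polynomial

theorem leadingCoeff_mul_prod_roots_sub_mul {K : Type*} [Field K] {p : K[X]}
    (hroots : p.roots.card = p.natDegree) (x : K) {y : K} (hy : y ≠ 0) :
    p.leadingCoeff * (p.roots.map fun z => x - y * z).prod = y ^ p.natDegree * p.eval (x / y) := by
  have hfactor : (p.roots.map fun z => x - y * z) = p.roots.map fun z => y * (x / y - z) :=
    Multiset.map_congr rfl fun z _ => by field_simp
  have heval : p.eval (x / y) = p.leadingCoeff * (p.roots.map fun z => x / y - z).prod := by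
    conv_lhs => rw [← C_leadingCoeff_mul_prod_multiset_X_sub_C hroots]
    simp [eval_multiset_prod, Multiset.map_map]
  rw [hfactor, Multiset.prod_map_mul, Multiset.map_const', Multiset.prod_replicate, hroots, heval]
  ring

end Polynomial

theorem exists_linear_factors_of_quadratic {K : Type*} [Field K] [IsAlgClosed K] (α β γ : K) :
    ∃ p₁ r₁ p₂ r₂ : K, p₁ * p₂ = α ∧ p₁ * r₂ + p₂ * r₁ = β ∧ r₁ * r₂ = γ := by
  rcases eq_or_ne α 0 with rfl | hα
  · exact ⟨β, γ, 0, 1, by ring, by ring, by ring⟩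
  have hdeg : (C α * X ^ 2 + C β * X + C γ).degree = 2 := by compute_degree!
  obtain ⟨ρ, hρ⟩ := IsAlgClosed.exists_root _ (hdeg ▸ two_ne_zero)
  simp only [IsRoot, eval_add, eval_mul, eval_C, eval_pow, eval_X] at hρ
  exact ⟨1, -ρ, α, β + α * ρ, by ring, by ring, by linear_combination -hρ⟩

theorem exists_add_eq_and_mul_eq {K : Type*} [Field K] [IsAlgClosed K] (s p : K) :
    ∃ u w : K, u + w = s ∧ u * w = p := by
  have hdeg : (X ^ 2 - C s * X + C p).degree = 2 := by compute_degree!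
  obtain ⟨u, hu⟩ := IsAlgClosed.exists_root _ (hdeg ▸ two_ne_zero)
  simp only [IsRoot, eval_add, eval_sub, eval_mul, eval_C, eval_pow, eval_X] at hu
  exact ⟨u, s - u, by ring, by linear_combination -hu⟩

theorem pow_add_pow_eq_of_add_eq_of_mul_eq {R : Type*} [CommRing R] [IsDomain R] {u w u' w' : R}
    (hs : u + w = u' + w') (hp : u * w = u' * w') (j : ℕ) : u ^ j + w ^ j = u' ^ j + w' ^ j := by
  have : (u' - u) * (u' - w) = 0 := by linear_combination (-u') * hs + hp
  rcases mul_eq_zero.mp this with h | h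
  · obtain rfl : u' = u := sub_eq_zero.mp h
    obtain rfl : w' = w := by linear_combination -hs
    rfl
  · obtain rfl : u' = w := sub_eq_zero.mp h
    obtain rfl : w' = u := by linear_combination -hs
    ring

theorem Multiset.esymm_eq_of_prod_X_sub_C_eq_add {R : Type*} [CommRing R] {n : ℕ}
    {s s' : Multiset R} (hs : s.card = n + 1) (hs' : s'.card = n + 1) (e : R)
    (h : (s.map fun r => X - C r).prod = (s'.map fun r => X - C r).prod + C ((-1) ^ n * e) * X) :
    (∀ k ≤ n + 1, k ≠ n → s.esymm k = s'.esymm k) ∧ s.esymm n = s'.esymm n + e := by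
  have hcoeff : ∀ k ≤ n + 1, s.esymm k = s'.esymm k + if k = n then e else 0 := by
    intro k hk
    have hc := congrArg (coeff · (n + 1 - k)) h
    simp only [coeff_add, coeff_C_mul_X] at hc
    rw [Multiset.prod_X_sub_C_coeff _ (by omega), Multiset.prod_X_sub_C_coeff _ (by omega), hs, hs',
      Nat.sub_sub_self hk] at hc
    have hsq : ((-1 : R) ^ k) * (-1) ^ k = 1 := by rw [← mul_pow]; simp
    split_ifs at hc ⊢ with hkn hk₁ hk₁
    · subst hkn; linear_combination (-1) ^ k * hc + (s'.esymm k + e - s.esymm k) * hsq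
    · omega
    · omega
    · linear_combination (-1) ^ k * hc + (s'.esymm k - s.esymm k) * hsq
  exact ⟨fun k hk hkn => by simpa [hkn] using hcoeff k hk, by simpa using hcoeff n (by omega)⟩

noncomputable section

namespace Bicritical

variable (n : ℕ) (a b c d : ℂ)

def fixedPointPoly : ℂ[X] := C c * X ^ (n + 1) - C a * X ^ n + C d * X - C b

/-- The binary form `y^(n+1) Φ(x / y)`. -/
def fixedPointForm (x y : ℂ) : ℂ :=
  c * x ^ (n + 1) - a * x ^ n * y + d * x * y ^ n - b * y ^ (n + 1)

def multiplier (z : ℂ) : ℂ := n * z ^ (n - 1) / (c * z ^ n + d) ^ 2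

def fixedPointMultipliers : Multiset ℂ := (fixedPointPoly n a b c d).roots.map (multiplier n c d)

def multiplierRemainder (X u w : ℂ) : ℂ :=
  2 * n * (1 + X) * (u ^ n + w ^ n) - (u ^ (n + 1) + w ^ (n + 1)) -
    n ^ 2 * (1 + X) ^ 2 * (u ^ (n - 1) + w ^ (n - 1))

variable {n a b c d}

theorem fixedPointForm_mul_fixedPointForm (hn : 1 ≤ n) (h : a * d - b * c = 1) (t : ℂ)
    {x₁ y₁ x₂ y₂ : ℂ} (hx : x₁ * x₂ = n * (a * b)) (hy : y₁ * y₂ = n * (c * d))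
    (hs : x₁ * y₂ + x₂ * y₁ = n * (1 + 2 * (b * c)) - t) :
    fixedPointForm n a b c d x₁ y₁ * fixedPointForm n a b c d x₂ y₂ =
      b * c * (n ^ n * (a ^ (n + 1) * b ^ (n - 1) + c ^ (n - 1) * d ^ (n + 1)) * t +
        multiplierRemainder n (b * c) (x₁ * y₂) (x₂ * y₁)) := by
  obtain ⟨m, rfl⟩ : ∃ m, n = m + 1 := ⟨n - 1, by omega⟩
  have expand : fixedPointForm (m + 1) a b c d x₁ y₁ * fixedPointForm (m + 1) a b c d x₂ y₂ =
      (x₁ * x₂) ^ (m + 1) * (c ^ 2 * (x₁ * x₂) - a * c * (x₁ * y₂ + x₂ * y₁) + a ^ 2 * (y₁ * y₂)) +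
      (y₁ * y₂) ^ (m + 1) * (d ^ 2 * (x₁ * x₂) - b * d * (x₁ * y₂ + x₂ * y₁) + b ^ 2 * (y₁ * y₂)) +
      (c * d * (x₁ * x₂) + a * b * (y₁ * y₂)) * ((x₁ * y₂) ^ (m + 1) + (x₂ * y₁) ^ (m + 1)) -
      b * c * ((x₁ * y₂) ^ (m + 2) + (x₂ * y₁) ^ (m + 2)) -
      a * d * (x₁ * x₂) * (y₁ * y₂) * ((x₁ * y₂) ^ m + (x₂ * y₁) ^ m) := by
    unfold fixedPointForm; ring
  rw [expand, hx, hy, hs]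
  simp only [multiplierRemainder, Nat.add_sub_cancel]
  set N : ℂ := ((m + 1 : ℕ) : ℂ)
  linear_combination ((N * (a * b)) ^ (m + 1) * (N * a * c) +
    (N * (c * d)) ^ (m + 1) * (N * b * d) +
    2 * N * b * c * ((x₁ * y₂) ^ (m + 1) + (x₂ * y₁) ^ (m + 1)) -
    N ^ 2 * b * c * (a * d + 1 + b * c) * ((x₁ * y₂) ^ m + (x₂ * y₁) ^ m)) * h

theorem multiplierRemainder_congr (X : ℂ) {u w u' w' : ℂ} (hs : u + w = u' + w')
    (hp : u * w = u' * w') : multiplierRemainder n X u w = multiplierRemainder n X u' w' := by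
  simp only [multiplierRemainder, pow_add_pow_eq_of_add_eq_of_mul_eq hs hp]

@[simp]
theorem eval_fixedPointPoly (z : ℂ) :
    (fixedPointPoly n a b c d).eval z = c * z ^ (n + 1) - a * z ^ n + d * z - b := by
  simp [fixedPointPoly]

theorem natDegree_fixedPointPoly (hn : 1 ≤ n) (hc : c ≠ 0) :
    (fixedPointPoly n a b c d).natDegree = n + 1 := by
  unfold fixedPointPoly
  compute_degree!
  simpa [show n ≠ 0 by omega] using hc

theorem leadingCoeff_fixedPointPoly (hn : 1 ≤ n) (hc : c ≠ 0) :
    (fixedPointPoly n a b c d).leadingCoeff = c := by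
  rw [leadingCoeff, natDegree_fixedPointPoly hn hc]
  simp [fixedPointPoly, coeff_C, show n ≠ 0 by omega]

theorem card_roots_fixedPointPoly (hn : 1 ≤ n) (hc : c ≠ 0) :
    (fixedPointPoly n a b c d).roots.card = n + 1 := by
  rw [IsAlgClosed.card_roots_eq_natDegree, natDegree_fixedPointPoly hn hc]

theorem c_mul_prod_roots_fixedPointPoly (hn : 1 ≤ n) (hc : c ≠ 0) (x y : ℂ) :
    c * ((fixedPointPoly n a b c d).roots.map fun z => x - y * z).prod =
      fixedPointForm n a b c d x y := by
  rcases eq_or_ne y 0 with rfl | hy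
  · simp [card_roots_fixedPointPoly hn hc, fixedPointForm, zero_pow (by omega : n ≠ 0), pow_succ']
  · have hprod := leadingCoeff_mul_prod_roots_sub_mul
      (IsAlgClosed.card_roots_eq_natDegree (p := fixedPointPoly n a b c d)) x hy
    rw [leadingCoeff_fixedPointPoly hn hc, natDegree_fixedPointPoly hn hc] at hprod
    rw [hprod, eval_fixedPointPoly, fixedPointForm, div_pow, div_pow]
    field_simp
    ring

theorem mul_sub_multiplier_of_isRoot (hn : 1 ≤ n) (h : a * d - b * c = 1) {z : ℂ}
    (hz : (fixedPointPoly n a b c d).IsRoot z) (t : ℂ) :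
    z * (t - multiplier n c d z) =
      n * (c * d) * z ^ 2 - (n * (1 + 2 * (b * c)) - t) * z + n * (a * b) := by
  obtain ⟨m, rfl⟩ : ∃ m, n = m + 1 := ⟨n - 1, by omega⟩
  rw [IsRoot, eval_fixedPointPoly] at hz
  have hinv : (c * z ^ (m + 1) + d) * (a - c * z) = 1 := by linear_combination (-c) * hz + h
  have hμ : multiplier (m + 1) c d z = (m + 1 : ℕ) * z ^ m * (a - c * z) ^ 2 := by
    rw [multiplier, Nat.add_sub_cancel,
      div_eq_iff (pow_ne_zero 2 (left_ne_zero_of_mul_eq_one hinv))]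
    linear_combination
      (-((m + 1 : ℕ) * z ^ m) * ((c * z ^ (m + 1) + d) * (a - c * z) + 1)) * hinv
  rw [hμ]
  linear_combination ((m + 1 : ℕ) * (a - c * z)) * hz - ((m + 1 : ℕ) * z) * h

theorem prod_sub_multiplier_of_b_ne_zero (hn : 1 ≤ n) (h : a * d - b * c = 1) (hb : b ≠ 0)
    (hc : c ≠ 0) (t : ℂ) {u w : ℂ} (hs : u + w = n * (1 + 2 * (b * c)) - t)
    (hp : u * w = n ^ 2 * (b * c * (1 + b * c))) :
    ((fixedPointPoly n a b c d).roots.map fun z => t - multiplier n c d z).prod =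
      (-1) ^ n * (n ^ n * (a ^ (n + 1) * b ^ (n - 1) + c ^ (n - 1) * d ^ (n + 1)) * t +
        multiplierRemainder n (b * c) u w) := by
  obtain ⟨p₁, r₁, p₂, r₂, hpp, hpr, hrr⟩ := exists_linear_factors_of_quadratic
    (n * (c * d) : ℂ) (-(n * (1 + 2 * (b * c)) - t)) (n * (a * b))
  have h₀ := c_mul_prod_roots_fixedPointPoly (a := a) (b := b) (d := d) hn hc 0 (-1)
  have h₁ := c_mul_prod_roots_fixedPointPoly (a := a) (b := b) (d := d) hn hc r₁ (-p₁)
  have h₂ := c_mul_prod_roots_fixedPointPoly (a := a) (b := b) (d := d) hn hc r₂ (-p₂)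
  set Z := (fixedPointPoly n a b c d).roots
  set P := (Z.map fun z => t - multiplier n c d z).prod
  have hfactor : ∀ z ∈ Z,
      (0 - (-1) * z) * (t - multiplier n c d z) = (r₁ - (-p₁) * z) * (r₂ - (-p₂) * z) := by
    intro z hz
    rw [zero_sub, neg_one_mul, neg_neg, mul_sub_multiplier_of_isRoot hn h (isRoot_of_mem_roots hz)]
    linear_combination (-z ^ 2) * hpp - z * hpr - hrr
  have hprod : (Z.map fun z => 0 - (-1) * z).prod * P =
      (Z.map fun z => r₁ - (-p₁) * z).prod * (Z.map fun z => r₂ - (-p₂) * z).prod := by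
    rw [← Multiset.prod_map_mul, ← Multiset.prod_map_mul]
    exact congrArg _ (Multiset.map_congr rfl hfactor)
  have hF₀ : fixedPointForm n a b c d 0 (-1) = (-1) ^ n * b := by
    simp [fixedPointForm, zero_pow (by omega : n ≠ 0), pow_succ, mul_comm]
  have hF := fixedPointForm_mul_fixedPointForm hn h t (x₁ := r₁) (y₁ := -p₁) (x₂ := r₂)
    (y₂ := -p₂) (by rw [hrr]) (by linear_combination hpp) (by linear_combination -hpr)
  rw [multiplierRemainder_congr (b * c) (u' := u) (w' := w) (by linear_combination -hpr - hs)
    (by linear_combination (r₁ * r₂) * hpp + (n * (c * d)) * hrr + (n ^ 2 * b * c) * h - hp)] at hF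
  have hsign : b * c * ((-1) ^ n * P) = b * c *
      (n ^ n * (a ^ (n + 1) * b ^ (n - 1) + c ^ (n - 1) * d ^ (n + 1)) * t +
        multiplierRemainder n (b * c) u w) := by
    rw [← hF, ← h₁, ← h₂]
    linear_combination c ^ 2 * hprod - (c * P) * h₀ - (c * P) * hF₀
  have hsq : ((-1 : ℂ) ^ n) * (-1) ^ n = 1 := by rw [← mul_pow]; simp
  linear_combination (-P) * hsq + (-1) ^ n * mul_left_cancel₀ (mul_ne_zero hb hc) hsign

theorem fixedPointPoly_of_b_eq_zero (k : ℕ) :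
    fixedPointPoly (k + 1) a 0 c d = X * (C c * X ^ (k + 1) - C a * X ^ k + C d) := by
  simp only [fixedPointPoly, map_zero]
  ring

theorem c_mul_prod_roots_sub_mul_of_b_eq_zero (k : ℕ) (hc : c ≠ 0) (x : ℂ) {y : ℂ} (hy : y ≠ 0) :
    c * ((C c * X ^ (k + 1) - C a * X ^ k + C d).roots.map fun z => x - y * z).prod =
      y ^ (k + 1) * (c * (x / y) ^ (k + 1) - a * (x / y) ^ k + d) := by
  have hdeg : (C c * X ^ (k + 1) - C a * X ^ k + C d).natDegree = k + 1 := by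
    compute_degree!
  have hlead : (C c * X ^ (k + 1) - C a * X ^ k + C d).leadingCoeff = c := by
    rw [leadingCoeff, hdeg]
    simp
  have hprod := leadingCoeff_mul_prod_roots_sub_mul
    (IsAlgClosed.card_roots_eq_natDegree (p := C c * X ^ (k + 1) - C a * X ^ k + C d)) x hy
  rw [hlead, hdeg] at hprod
  simpa using hprod

theorem prod_sub_multiplier_of_b_eq_zero (hn : 2 ≤ n) (h : a * d - b * c = 1) (hb : b = 0)
    (hc : c ≠ 0) (t : ℂ) {u w : ℂ} (hs : u + w = n * (1 + 2 * (b * c)) - t)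
    (hp : u * w = n ^ 2 * (b * c * (1 + b * c))) :
    ((fixedPointPoly n a b c d).roots.map fun z => t - multiplier n c d z).prod =
      (-1) ^ n * (n ^ n * (a ^ (n + 1) * b ^ (n - 1) + c ^ (n - 1) * d ^ (n + 1)) * t +
        multiplierRemainder n (b * c) u w) := by
  subst hb
  obtain ⟨k, rfl⟩ : ∃ k, n = k + 1 := ⟨n - 1, by omega⟩
  have had : a * d = 1 := by linear_combination h
  have hd : d ≠ 0 := right_ne_zero_of_mul_eq_one had
  set N : ℂ := ((k + 1 : ℕ) : ℂ)
  have hN : N ≠ 0 := Nat.cast_ne_zero.mpr (by omega)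
  set ψ : ℂ[X] := C c * X ^ (k + 1) - C a * X ^ k + C d
  have hψ0 : ψ ≠ 0 := fun h0 => hd (by simpa [ψ, show k ≠ 0 by omega] using congrArg (eval 0) h0)
  have hroots : (fixedPointPoly (k + 1) a 0 c d).roots = 0 ::ₘ ψ.roots := by
    rw [fixedPointPoly_of_b_eq_zero, roots_mul (mul_ne_zero X_ne_zero hψ0), roots_X,
      Multiset.singleton_add]
  have hlin : ∀ z ∈ ψ.roots, t - multiplier (k + 1) c d z = (t - N) - (-(N * (c * d))) * z := by
    intro z hz
    have hzψ : ψ.IsRoot z := isRoot_of_mem_roots hz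
    have hz0 : z ≠ 0 := by
      rintro rfl
      exact hd (by simpa [ψ, show k ≠ 0 by omega] using hzψ)
    have hzΦ : (fixedPointPoly (k + 1) a 0 c d).IsRoot z := by
      rw [fixedPointPoly_of_b_eq_zero, IsRoot, eval_mul, hzψ.eq_zero, mul_zero]
    apply mul_left_cancel₀ hz0
    linear_combination mul_sub_multiplier_of_isRoot (by omega) h hzΦ t
  have hμ₀ : multiplier (k + 1) c d 0 = 0 := by simp [multiplier, show k ≠ 0 by omega]
  -- so that `t - μ(z) = N c d (z - s)` at the nonzero fixed points
  obtain ⟨s, rfl⟩ : ∃ s, t = N - N * (c * d) * s :=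
    ⟨(N - t) / (N * (c * d)), by field_simp; ring⟩
  have hψprod := c_mul_prod_roots_sub_mul_of_b_eq_zero (a := a) (d := d) k hc
    (N - N * (c * d) * s - N) (y := -(N * (c * d))) (by simp [hN, hc, hd])
  rw [show (N - N * (c * d) * s - N) / -(N * (c * d)) = s by field_simp; ring] at hψprod
  rw [hroots, Multiset.map_cons, Multiset.prod_cons, hμ₀, Multiset.map_congr rfl hlin,
    multiplierRemainder_congr (0 * c) (u' := N * (c * d) * s) (w' := 0) (by linear_combination hs)
      (by linear_combination hp)]
  simp only [multiplierRemainder, Nat.add_sub_cancel, zero_mul, zero_pow (by omega : k ≠ 0),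
    zero_pow (by omega : k + 1 ≠ 0), zero_pow (by omega : k + 1 + 1 ≠ 0)]
  apply mul_left_cancel₀ hc
  linear_combination (N - N * (c * d) * s) * hψprod +
    (-1) ^ k * (N - N * (c * d) * s) * (N * (c * d)) ^ k * s ^ k * N * c * had

theorem card_fixedPointMultipliers (hn : 1 ≤ n) (hc : c ≠ 0) :
    (fixedPointMultipliers n a b c d).card = n + 1 := by
  rw [fixedPointMultipliers, Multiset.card_map, card_roots_fixedPointPoly hn hc]

theorem prod_sub_fixedPointMultipliers (hn : 2 ≤ n) (h : a * d - b * c = 1) (hc : c ≠ 0) (t : ℂ)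
    {u w : ℂ} (hs : u + w = n * (1 + 2 * (b * c)) - t)
    (hp : u * w = n ^ 2 * (b * c * (1 + b * c))) :
    ((fixedPointMultipliers n a b c d).map fun μ => t - μ).prod =
      (-1) ^ n * (n ^ n * (a ^ (n + 1) * b ^ (n - 1) + c ^ (n - 1) * d ^ (n + 1)) * t +
        multiplierRemainder n (b * c) u w) := by
  rw [fixedPointMultipliers, Multiset.map_map]
  rcases eq_or_ne b 0 with hb | hb
  · exact prod_sub_multiplier_of_b_eq_zero hn h hb hc t hs hp
  · exact prod_sub_multiplier_of_b_ne_zero (by omega) h hb hc t hs hp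

end Bicritical

end

/-- Theorem 2.6 (invariance): for a normalized bicritical map
`f(z) = (a z^n + b)/(c z^n + d)` (`ad - bc = 1`, `c ≠ 0`), let `σ_k` be the
`k`-th elementary symmetric function of the multiset of the `n+1` fixed-point
multipliers, i.e. of the images of the roots (with multiplicity) of
`Φ(z) = c z^{n+1} - a z^n + d z - b` under `z ↦ n z^{n-1}/(c z^n + d)²`.
If two such maps have the same invariant `X = bc`, then `σ_k = σ'_k` for all
`k ≠ n`, while `σ_n - nⁿ Y = σ'_n - nⁿ Y'` where
`Y = a^{n+1} b^{n-1} + c^{n-1} d^{n+1}`. -/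
theorem stmt13 (n : ℕ) (hn : 2 ≤ n) (a b c d a' b' c' d' : ℂ)
    (h : a * d - b * c = 1) (hc : c ≠ 0)
    (h' : a' * d' - b' * c' = 1) (hc' : c' ≠ 0)
    (hX : b * c = b' * c') :
    let M : Multiset ℂ :=
      ((Polynomial.C c * Polynomial.X ^ (n + 1) - Polynomial.C a * Polynomial.X ^ n +
        Polynomial.C d * Polynomial.X - Polynomial.C b : Polynomial ℂ).roots).map
        fun z => (n : ℂ) * z ^ (n - 1) / (c * z ^ n + d) ^ 2
    let M' : Multiset ℂ :=
      ((Polynomial.C c' * Polynomial.X ^ (n + 1) - Polynomial.C a' * Polynomial.X ^ n +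
        Polynomial.C d' * Polynomial.X - Polynomial.C b' : Polynomial ℂ).roots).map
        fun z => (n : ℂ) * z ^ (n - 1) / (c' * z ^ n + d') ^ 2
    (∀ k ≤ n + 1, k ≠ n → M.esymm k = M'.esymm k) ∧
      M.esymm n - (n : ℂ) ^ n * (a ^ (n + 1) * b ^ (n - 1) + c ^ (n - 1) * d ^ (n + 1)) =
        M'.esymm n - (n : ℂ) ^ n * (a' ^ (n + 1) * b' ^ (n - 1) + c' ^ (n - 1) * d' ^ (n + 1)) := by
  intro M M'
  rw [show M = Bicritical.fixedPointMultipliers n a b c d from rfl,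
    show M' = Bicritical.fixedPointMultipliers n a' b' c' d' from rfl]
  have key : ((Bicritical.fixedPointMultipliers n a b c d).map fun r => X - C r).prod =
      ((Bicritical.fixedPointMultipliers n a' b' c' d').map fun r => X - C r).prod +
      C ((-1) ^ n * (n ^ n * ((a ^ (n + 1) * b ^ (n - 1) + c ^ (n - 1) * d ^ (n + 1)) -
        (a' ^ (n + 1) * b' ^ (n - 1) + c' ^ (n - 1) * d' ^ (n + 1))))) * X := by
    refine Polynomial.funext fun t => ?_
    obtain ⟨u, w, hs, hp⟩ :=
      exists_add_eq_and_mul_eq ((n : ℂ) * (1 + 2 * (b * c)) - t) (n ^ 2 * (b * c * (1 + b * c)))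
    simp only [eval_add, eval_mul, eval_C, eval_X, eval_multiset_prod, Multiset.map_map,
      Function.comp_def, eval_sub]
    rw [Bicritical.prod_sub_fixedPointMultipliers hn h hc t hs hp,
      Bicritical.prod_sub_fixedPointMultipliers hn h' hc' t (hX ▸ hs) (hX ▸ hp), hX]
    ring
  obtain ⟨hk, hn'⟩ := Multiset.esymm_eq_of_prod_X_sub_C_eq_add
    (Bicritical.card_fixedPointMultipliers (by omega) hc)
    (Bicritical.card_fixedPointMultipliers (by omega) hc') _ key
  exact ⟨hk, by rw [hn']; ring⟩
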